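/- For fixed z, y, Δ, l, the condition 'for all ỹ ∈ Bias_{l,Δ}(y), |z·ỹ − z·y| ≤ ε' holds if and only if ε ≥ max(S⁺, S⁻), where S⁺ is the sum of the l largest ρ_i^+ = max_{d∈δ_i} z_i d and S⁻ is the sum of the l largest ρ_i^- = max_{d∈δ_i} (−z_i d). -/

import Mathlib

open Matrix Set Finset

/-- The bias set: label vectors differing from `y` in at most `l` coordinates,
with per-coordinate difference in `[δl i, δu i]`. -/
def Bias {n : ℕ} (y δl δu : Fin n → ℝ) (l : ℕ) : Set (Fin n → ℝ) :=
  {y' | (∀ i, y' i - y i ∈ Set.Icc (δl i) (δu i)) ∧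
        (Finset.univ.filter (fun i => y' i ≠ y i)).card ≤ l}

/-- Dot product of two vectors in `ℝ^n`. -/
def dotR {n : ℕ} (z v : Fin n → ℝ) : ℝ := ∑ i, z i * v i

/-- Sum of the `l` largest entries of `ρ`. -/
noncomputable def topSum {n : ℕ} (ρ : Fin n → ℝ) (l : ℕ) : ℝ :=
  (((List.ofFn ρ).mergeSort (· ≥ ·)).take l).sum

/-!
Writing `w = ±z`, each side of `|z·ỹ - z·y| ≤ ε` is a bound on the linear functional
`ỹ ↦ ∑ wᵢ (ỹᵢ - yᵢ)` over the bias set. On a coordinate it may change, a bias vector gains at most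
`ρᵢ = max_{d ∈ δᵢ} wᵢ d ≥ 0` (nonnegative because `0 ∈ δᵢ`), and this gain is attained at an endpoint
of `δᵢ`. So the supremum is the largest sum of at most `l` of the `ρᵢ`, i.e. the sum of the `l`
largest ones, and it is attained.
-/

namespace List

variable {α : Type*} [AddCommMonoid α] [LinearOrder α] [IsOrderedAddMonoid α]

theorem Sublist.sum_le_sum_take_of_pairwise_ge {m L : List α} (h : m <+ L)
    (hL : L.Pairwise (· ≥ ·)) : m.sum ≤ (L.take m.length).sum := by
  induction h with
  | slnil => simp
  | @cons m L a h ih =>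
    refine (ih hL.of_cons).trans ?_
    cases hm : m.length with
    | zero => simp
    | succ k =>
      have hk : k < L.length := by have := h.length_le; omega
      have ha : L[k] ≤ a := rel_of_pairwise_cons hL (getElem_mem hk)
      rw [sum_take_succ _ _ hk, take_succ_cons, sum_cons, add_comm]
      gcongr
  | @cons_cons m L a _ ih =>
    rw [length_cons, take_succ_cons, sum_cons, sum_cons]
    gcongr
    exact ih hL.of_cons

end List

section topSum

variable {n : ℕ}

theorem sum_le_topSum {ρ : Fin n → ℝ} (hρ : ∀ i, 0 ≤ ρ i) {l : ℕ} {s : Finset (Fin n)}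
    (hs : #s ≤ l) : ∑ i ∈ s, ρ i ≤ topSum ρ l := by
  set L := (List.ofFn ρ).mergeSort (· ≥ ·)
  have hsL : (s.toList.map ρ).Subperm L := by
    obtain ⟨t, ht, hsub⟩ := s.nodup_toList.subperm fun i _ => List.mem_finRange i
    refine List.Subperm.trans ⟨t.map ρ, ht.map ρ, hsub.map ρ⟩ ?_
    rw [← List.ofFn_eq_map]
    exact (List.mergeSort_perm _ _).symm.subperm
  obtain ⟨t, ht, hsub⟩ := hsL
  have hL_nonneg : ∀ x ∈ L, 0 ≤ x := fun x hx => by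
    obtain ⟨i, rfl⟩ := List.mem_ofFn.mp ((List.mergeSort_perm _ _).mem_iff.mp hx)
    exact hρ i
  calc ∑ i ∈ s, ρ i = t.sum := by rw [← s.sum_map_toList, ht.sum_eq]
    _ ≤ (L.take t.length).sum := hsub.sum_le_sum_take_of_pairwise_ge (List.pairwise_mergeSort' _ _)
    _ ≤ (L.take l).sum := by
      refine (List.take_sublist_take_left ?_).sum_le_sum fun x hx => hL_nonneg x ?_
      · simpa [ht.length_eq] using hs
      · exact (List.take_sublist _ _).subset hx

theorem exists_sum_eq_topSum (ρ : Fin n → ℝ) (l : ℕ) :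
    ∃ s : Finset (Fin n), #s ≤ l ∧ ∑ i ∈ s, ρ i = topSum ρ l := by
  set L := (List.ofFn ρ).mergeSort (· ≥ ·)
  obtain ⟨t, ht, hsub⟩ : (L.take l).Subperm ((List.finRange n).map ρ) := by
    rw [← List.ofFn_eq_map]
    exact (List.take_sublist l L).subperm.trans (List.mergeSort_perm _ _).subperm
  obtain ⟨u, hu, rfl⟩ := List.sublist_map_iff.mp hsub
  have hnd : u.Nodup := (List.nodup_finRange n).sublist hu
  refine ⟨u.toFinset, ?_, ?_⟩
  · rw [List.toFinset_card_of_nodup hnd, ← u.length_map ρ, ht.length_eq]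
    exact List.length_take_le _ _
  · rw [List.sum_toFinset ρ hnd, ht.sum_eq]
    rfl

end topSum

theorem mul_le_max_mul_of_mem_Icc {R : Type*} [Ring R] [LinearOrder R] [IsOrderedRing R]
    {a b d : R} (w : R) (hd : d ∈ Icc a b) : w * d ≤ max (w * a) (w * b) := by
  rcases le_total 0 w with hw | hw
  · exact le_max_of_le_right (mul_le_mul_of_nonneg_left hd.2 hw)
  · exact le_max_of_le_left (mul_le_mul_of_nonpos_left hd.1 hw)

theorem exists_mem_Icc_mul_eq_max {R : Type*} [Mul R] [LinearOrder R] {a b : R} (w : R)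
    (hab : a ≤ b) : ∃ d ∈ Icc a b, w * d = max (w * a) (w * b) := by
  rcases le_total (w * a) (w * b) with h | h
  · exact ⟨b, right_mem_Icc.mpr hab, (max_eq_right h).symm⟩
  · exact ⟨a, left_mem_Icc.mpr hab, (max_eq_left h).symm⟩

section Bias

variable {n : ℕ} {y δl δu : Fin n → ℝ} {l : ℕ}

theorem sum_mul_sub_le_topSum_of_mem_Bias (w : Fin n → ℝ) (hl : ∀ i, δl i ≤ 0)
    (hu : ∀ i, 0 ≤ δu i) {y' : Fin n → ℝ} (hy' : y' ∈ Bias y δl δu l) :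
    ∑ i, w i * (y' i - y i) ≤ topSum (fun i => max (w i * δl i) (w i * δu i)) l := by
  obtain ⟨hIcc, hcard⟩ := hy'
  calc ∑ i, w i * (y' i - y i)
      = ∑ i with y' i ≠ y i, w i * (y' i - y i) := by
        refine (sum_filter_of_ne fun i _ hne => ?_).symm
        intro h
        simp [h] at hne
    _ ≤ ∑ i with y' i ≠ y i, max (w i * δl i) (w i * δu i) :=
        sum_le_sum fun i _ => mul_le_max_mul_of_mem_Icc _ (hIcc i)
    _ ≤ _ := sum_le_topSum (fun i => by
        simpa using mul_le_max_mul_of_mem_Icc (w i) ⟨hl i, hu i⟩) hcard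

theorem exists_mem_Bias_sum_mul_sub_eq_topSum (w : Fin n → ℝ) (hl : ∀ i, δl i ≤ 0)
    (hu : ∀ i, 0 ≤ δu i) :
    ∃ y' ∈ Bias y δl δu l,
      ∑ i, w i * (y' i - y i) = topSum (fun i => max (w i * δl i) (w i * δu i)) l := by
  obtain ⟨s, hs, hsum⟩ := exists_sum_eq_topSum (fun i => max (w i * δl i) (w i * δu i)) l
  choose d hd hwd using fun i => exists_mem_Icc_mul_eq_max (w i) ((hl i).trans (hu i))
  refine ⟨fun i => y i + if i ∈ s then d i else 0, ⟨fun i => ?_, ?_⟩, ?_⟩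
  · rw [add_sub_cancel_left]
    split_ifs
    · exact hd i
    · exact ⟨hl i, hu i⟩
  · refine (Finset.card_le_card fun i hi => ?_).trans hs
    by_contra his
    simp [his] at hi
  · simp [← hsum, hwd]

theorem forall_mem_Bias_sum_mul_sub_le_iff (w : Fin n → ℝ) (hl : ∀ i, δl i ≤ 0)
    (hu : ∀ i, 0 ≤ δu i) (ε : ℝ) :
    (∀ y' ∈ Bias y δl δu l, ∑ i, w i * (y' i - y i) ≤ ε) ↔
      topSum (fun i => max (w i * δl i) (w i * δu i)) l ≤ ε := by
  refine ⟨fun h => ?_, fun h y' hy' => (sum_mul_sub_le_topSum_of_mem_Bias w hl hu hy').trans h⟩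
  obtain ⟨y', hy', hsum⟩ := exists_mem_Bias_sum_mul_sub_eq_topSum w hl hu (y := y) (l := l)
  exact hsum ▸ h y' hy'

end Bias

theorem dotR_sub_dotR {n : ℕ} (z v v' : Fin n → ℝ) :
    dotR z v' - dotR z v = ∑ i, z i * (v' i - v i) := by
  simp only [dotR, ← sum_sub_distrib, mul_sub]

theorem stmt18_general {n : ℕ} (z y δl δu : Fin n → ℝ)
    (hl : ∀ i, δl i ≤ 0) (hu : ∀ i, 0 ≤ δu i) (l : ℕ)
    (ε : ℝ) :
    (∀ y' ∈ Bias y δl δu l, |dotR z y' - dotR z y| ≤ ε) ↔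
      max (topSum (fun i => max (z i * δl i) (z i * δu i)) l)
          (topSum (fun i => max (-(z i) * δl i) (-(z i) * δu i)) l) ≤ ε := by
  rw [max_le_iff, ← forall_mem_Bias_sum_mul_sub_le_iff z hl hu,
    ← forall_mem_Bias_sum_mul_sub_le_iff (fun i => -z i) hl hu, ← forall₂_and]
  refine forall₂_congr fun y' _ => ?_
  rw [abs_le, dotR_sub_dotR, neg_le, ← sum_neg_distrib]
  simp only [neg_mul, and_comm]

/-- Characterization of the minimal certifiable robustness radius:
`|z·ỹ - z·y| ≤ ε` for all `ỹ` in the bias set iff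
`ε ≥ max S⁺ S⁻`, where `S⁺` (resp. `S⁻`) is the sum of the `l` largest
positive (resp. negative) potential impacts. -/
theorem stmt18 {n : ℕ} (z y δl δu : Fin n → ℝ)
    (hl : ∀ i, δl i ≤ 0) (hu : ∀ i, 0 ≤ δu i) (l : ℕ) (hln : l ≤ n)
    (ε : ℝ) (hε : 0 ≤ ε) :
    (∀ y' ∈ Bias y δl δu l, |dotR z y' - dotR z y| ≤ ε) ↔
      max (topSum (fun i => max (z i * δl i) (z i * δu i)) l)
          (topSum (fun i => max (-(z i) * δl i) (-(z i) * δu i)) l) ≤ ε :=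
  stmt18_general z y δl δu hl hu l ε
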